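/- arXiv:1912.02953 — 2 statements merged into one kernel-verified Lean document; each statement's English description precedes it below -/
import Mathlib

section
/- In the triangular grid under rule 12: let c be a configuration with at least one active cell, u a cell, d ≥ 2 the distance from u to the nearest active cell of c, and v a neighbor of u. Then F^{d−1}(c)_v = 1 if and only if S_v ∩ D_d(u) contains a cell that is active in c. -/
/-- Neighbors in the triangular grid: cell `(i,j)` is adjacent to `(i-1,j)`,
`(i+1,j)`, and `(i,j-1)` if `i+j` is even, `(i,j+1)` if `i+j` is odd. -/
def triNbrs (p : ℤ × ℤ) : Finset (ℤ × ℤ) :=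
  {(p.1 - 1, p.2), (p.1 + 1, p.2),
   (p.1, if Even (p.1 + p.2) then p.2 - 1 else p.2 + 1)}

/-- Number of active neighbors of `p` in configuration `c`. -/
def triActCount (c : ℤ × ℤ → Bool) (p : ℤ × ℤ) : ℕ :=
  ((triNbrs p).filter (fun q => c q = true)).card

/-- The freezing totalistic rule on the triangular grid with activating set `I`:
active cells stay active, an inactive cell becomes active iff its number of
active neighbors lies in `I`. -/
def ruleT (I : Finset ℕ) (c : ℤ × ℤ → Bool) : ℤ × ℤ → Bool :=
  fun p => c p || decide (triActCount c p ∈ I)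

/-- `triStepsTo n p q` : there is a walk of length `n` from `p` to `q` in the
triangular grid. -/
def triStepsTo : ℕ → ℤ × ℤ → ℤ × ℤ → Prop
  | 0, p, q => p = q
  | n + 1, p, q => ∃ r ∈ triNbrs p, triStepsTo n r q

/-- Graph distance in the triangular grid. -/
noncomputable def triDist (p q : ℤ × ℤ) : ℕ := sInf {n | triStepsTo n p q}

/-- Distance from `u` to the nearest active cell of `c`. -/
noncomputable def triDistToActive (c : ℤ × ℤ → Bool) (u : ℤ × ℤ) : ℕ :=
  sInf {d | ∃ v, c v = true ∧ triDist u v = d}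


/-- The semi-plane `S_v` determined by a cell `u` and a neighbor `v` of `u`:
the set of cells whose triangles lie on the same side as `v` of the straight
line containing the common edge of the triangles `u` and `v` (expressed
combinatorially in the `(i,j)` encoding of the triangular grid). -/
def semiPlane (u v : ℤ × ℤ) : Set (ℤ × ℤ) :=
  if v = (u.1, u.2 - 1) then {w | w.2 < u.2}
  else if v = (u.1, u.2 + 1) then {w | u.2 < w.2}
  else if v = (u.1 + 1, u.2) then
    (if Even (u.1 + u.2) then {w | u.1 + u.2 < w.1 + w.2}
     else {w | u.1 - u.2 < w.1 - w.2})
  else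
    (if Even (u.1 + u.2) then {w | u.2 - u.1 < w.2 - w.1}
     else {w | w.1 + w.2 < u.1 + u.2})

/-! ### Lane coordinates and the explicit distance function -/

/-- First lane coordinate. -/
def cA (p : ℤ × ℤ) : ℤ := (p.1 + p.2 + 1) / 2
/-- Second lane coordinate. -/
def cB (p : ℤ × ℤ) : ℤ := (p.1 - p.2) / 2

/-- Explicit distance function on the triangular grid. -/
def phi (p q : ℤ × ℤ) : ℕ :=
  (cA p - cA q).natAbs + (cB p - cB q).natAbs + (p.2 - q.2).natAbs

lemma coords (p : ℤ × ℤ) :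
    cA p + cB p = p.1 ∧ cA p - cB p = p.2 + (p.1 + p.2) % 2 := by
  obtain ⟨a, b⟩ := p; simp only [cA, cB]; omega

lemma cleft (a b : ℤ) :
    cA (a - 1, b) = cA (a, b) - (a + b) % 2 ∧
    cB (a - 1, b) = cB (a, b) - 1 + (a + b) % 2 := by
  simp only [cA, cB]; omega

lemma cright (a b : ℤ) :
    cA (a + 1, b) = cA (a, b) + 1 - (a + b) % 2 ∧
    cB (a + 1, b) = cB (a, b) + (a + b) % 2 := by
  simp only [cA, cB]; omega

lemma cdown (a b : ℤ) (h : (a + b) % 2 = 0) :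
    cA (a, b - 1) = cA (a, b) ∧ cB (a, b - 1) = cB (a, b) := by
  simp only [cA, cB]; omega

lemma cup (a b : ℤ) (h : (a + b) % 2 = 1) :
    cA (a, b + 1) = cA (a, b) ∧ cB (a, b + 1) = cB (a, b) := by
  simp only [cA, cB]; omega

attribute [irreducible] cA cB

/-! ### Pure-variable `natAbs` helpers (fast for `omega`) -/

lemma abs_zero3 (X Y Z : ℤ) :
    X.natAbs + Y.natAbs + Z.natAbs = 0 ↔ X = 0 ∧ Y = 0 ∧ Z = 0 := by omega

lemma move3 (X Y Z X' Y' Z' : ℤ)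
    (h : (Y' = Y ∧ Z' = Z ∧ (X' = X + 1 ∨ X' = X - 1)) ∨
         (X' = X ∧ Z' = Z ∧ (Y' = Y + 1 ∨ Y' = Y - 1)) ∨
         (X' = X ∧ Y' = Y ∧ (Z' = Z + 1 ∨ Z' = Z - 1))) :
    X'.natAbs + Y'.natAbs + Z'.natAbs ≤ X.natAbs + Y.natAbs + Z.natAbs + 1 ∧
    X.natAbs + Y.natAbs + Z.natAbs ≤ X'.natAbs + Y'.natAbs + Z'.natAbs + 1 := by
  omega

lemma desc_even (X Y Z sq : ℤ) (hc : X - Y - Z = -sq) (h0 : 0 ≤ sq) (h1 : sq ≤ 1)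
    (hne : ¬(X = 0 ∧ Y = 0 ∧ Z = 0)) :
    (X + 1).natAbs + Y.natAbs + Z.natAbs + 1 = X.natAbs + Y.natAbs + Z.natAbs ∨
    X.natAbs + (Y - 1).natAbs + Z.natAbs + 1 = X.natAbs + Y.natAbs + Z.natAbs ∨
    X.natAbs + Y.natAbs + (Z - 1).natAbs + 1 = X.natAbs + Y.natAbs + Z.natAbs := by
  omega

lemma desc_odd (X Y Z sq : ℤ) (hc : X - Y - Z = 1 - sq) (h0 : 0 ≤ sq) (h1 : sq ≤ 1)
    (hne : ¬(X = 0 ∧ Y = 0 ∧ Z = 0)) :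
    (X - 1).natAbs + Y.natAbs + Z.natAbs + 1 = X.natAbs + Y.natAbs + Z.natAbs ∨
    X.natAbs + (Y + 1).natAbs + Z.natAbs + 1 = X.natAbs + Y.natAbs + Z.natAbs ∨
    X.natAbs + Y.natAbs + (Z + 1).natAbs + 1 = X.natAbs + Y.natAbs + Z.natAbs := by
  omega

lemma ixp (X Y Z : ℤ) :
    (X + 1).natAbs + Y.natAbs + Z.natAbs + 1 = X.natAbs + Y.natAbs + Z.natAbs ↔
      X < 0 := by omega

lemma ixm (X Y Z : ℤ) :
    (X - 1).natAbs + Y.natAbs + Z.natAbs + 1 = X.natAbs + Y.natAbs + Z.natAbs ↔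
      0 < X := by omega

lemma iyp (X Y Z : ℤ) :
    X.natAbs + (Y + 1).natAbs + Z.natAbs + 1 = X.natAbs + Y.natAbs + Z.natAbs ↔
      Y < 0 := by omega

lemma iym (X Y Z : ℤ) :
    X.natAbs + (Y - 1).natAbs + Z.natAbs + 1 = X.natAbs + Y.natAbs + Z.natAbs ↔
      0 < Y := by omega

lemma izp (X Y Z : ℤ) :
    X.natAbs + Y.natAbs + (Z + 1).natAbs + 1 = X.natAbs + Y.natAbs + Z.natAbs ↔
      Z < 0 := by omega

lemma izm (X Y Z : ℤ) :
    X.natAbs + Y.natAbs + (Z - 1).natAbs + 1 = X.natAbs + Y.natAbs + Z.natAbs ↔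
      0 < Z := by omega

/-! ### Basic properties of `phi` -/

lemma mem_triNbrs {r p : ℤ × ℤ} : r ∈ triNbrs p ↔
    r = (p.1 - 1, p.2) ∨ r = (p.1 + 1, p.2) ∨
      r = (p.1, if Even (p.1 + p.2) then p.2 - 1 else p.2 + 1) := by
  simp [triNbrs]

lemma phi_eq_zero_iff {p q : ℤ × ℤ} : phi p q = 0 ↔ p = q := by
  obtain ⟨a, b⟩ := p; obtain ⟨c, d⟩ := q
  obtain ⟨g1, g2⟩ := coords (a, b); obtain ⟨g3, g4⟩ := coords (c, d)
  simp only [phi, Prod.mk.injEq]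
  rw [abs_zero3]
  omega

lemma phi_step {r p : ℤ × ℤ} (h : r ∈ triNbrs p) (q : ℤ × ℤ) :
    phi p q ≤ phi r q + 1 ∧ phi r q ≤ phi p q + 1 := by
  obtain ⟨a, b⟩ := p; obtain ⟨c, d⟩ := q
  rw [mem_triNbrs] at h
  rcases h with h | h | h
  · obtain ⟨e1, e2⟩ := cleft a b
    subst h; simp only [phi]
    have m := move3 (cA (a, b) - cA (c, d)) (cB (a, b) - cB (c, d)) (b - d)
      (cA (a - 1, b) - cA (c, d)) (cB (a - 1, b) - cB (c, d)) (b - d) (by omega)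
    exact ⟨m.2, m.1⟩
  · obtain ⟨e1, e2⟩ := cright a b
    subst h; simp only [phi]
    have m := move3 (cA (a, b) - cA (c, d)) (cB (a, b) - cB (c, d)) (b - d)
      (cA (a + 1, b) - cA (c, d)) (cB (a + 1, b) - cB (c, d)) (b - d) (by omega)
    exact ⟨m.2, m.1⟩
  · rcases Int.even_or_odd (a + b) with he | he
    · obtain ⟨e1, e2⟩ := cdown a b (Int.even_iff.mp he)
      rw [if_pos he] at h; subst h; simp only [phi]
      have m := move3 (cA (a, b) - cA (c, d)) (cB (a, b) - cB (c, d)) (b - d)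
        (cA (a, b - 1) - cA (c, d)) (cB (a, b - 1) - cB (c, d)) (b - 1 - d) (by omega)
      exact ⟨m.2, m.1⟩
    · obtain ⟨e1, e2⟩ := cup a b (Int.odd_iff.mp he)
      rw [if_neg (Int.not_even_iff_odd.mpr he)] at h; subst h; simp only [phi]
      have m := move3 (cA (a, b) - cA (c, d)) (cB (a, b) - cB (c, d)) (b - d)
        (cA (a, b + 1) - cA (c, d)) (cB (a, b + 1) - cB (c, d)) (b + 1 - d) (by omega)
      exact ⟨m.2, m.1⟩

lemma phi_descent {p q : ℤ × ℤ} (h : p ≠ q) :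
    ∃ r ∈ triNbrs p, phi r q + 1 = phi p q := by
  obtain ⟨a, b⟩ := p; obtain ⟨c, d⟩ := q
  have hne : ¬(a = c ∧ b = d) := fun ⟨h1, h2⟩ => h (by simp [h1, h2])
  obtain ⟨g1, g2⟩ := coords (a, b); obtain ⟨g3, g4⟩ := coords (c, d)
  obtain ⟨l1, l2⟩ := cleft a b
  obtain ⟨r1, r2⟩ := cright a b
  rcases Int.even_or_odd (a + b) with he | he
  · have he' := Int.even_iff.mp he
    obtain ⟨v1, v2⟩ := cdown a b he'
    have key := desc_even (cA (a, b) - cA (c, d)) (cB (a, b) - cB (c, d)) (b - d)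
      ((c + d) % 2) (by omega) (by omega) (by omega) (by omega)
    rcases key with k | k | k
    · refine ⟨(a + 1, b), by rw [mem_triNbrs]; exact Or.inr (Or.inl rfl), ?_⟩
      simp only [phi]
      rw [show cA (a + 1, b) - cA (c, d) = cA (a, b) - cA (c, d) + 1 from by omega,
          show cB (a + 1, b) - cB (c, d) = cB (a, b) - cB (c, d) from by omega]
      exact k
    · refine ⟨(a - 1, b), by rw [mem_triNbrs]; exact Or.inl rfl, ?_⟩
      simp only [phi]
      rw [show cA (a - 1, b) - cA (c, d) = cA (a, b) - cA (c, d) from by omega,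
          show cB (a - 1, b) - cB (c, d) = cB (a, b) - cB (c, d) - 1 from by omega]
      exact k
    · refine ⟨(a, b - 1), by rw [mem_triNbrs, if_pos he]; exact Or.inr (Or.inr rfl), ?_⟩
      simp only [phi]
      rw [show cA (a, b - 1) - cA (c, d) = cA (a, b) - cA (c, d) from by omega,
          show cB (a, b - 1) - cB (c, d) = cB (a, b) - cB (c, d) from by omega,
          show b - 1 - d = (b - d) - 1 from by omega]
      exact k
  · have he' := Int.odd_iff.mp he
    obtain ⟨v1, v2⟩ := cup a b he'
    have key := desc_odd (cA (a, b) - cA (c, d)) (cB (a, b) - cB (c, d)) (b - d)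
      ((c + d) % 2) (by omega) (by omega) (by omega) (by omega)
    rcases key with k | k | k
    · refine ⟨(a - 1, b), by rw [mem_triNbrs]; exact Or.inl rfl, ?_⟩
      simp only [phi]
      rw [show cA (a - 1, b) - cA (c, d) = cA (a, b) - cA (c, d) - 1 from by omega,
          show cB (a - 1, b) - cB (c, d) = cB (a, b) - cB (c, d) from by omega]
      exact k
    · refine ⟨(a + 1, b), by rw [mem_triNbrs]; exact Or.inr (Or.inl rfl), ?_⟩
      simp only [phi]
      rw [show cA (a + 1, b) - cA (c, d) = cA (a, b) - cA (c, d) from by omega,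
          show cB (a + 1, b) - cB (c, d) = cB (a, b) - cB (c, d) + 1 from by omega]
      exact k
    · refine ⟨(a, b + 1), by
        rw [mem_triNbrs, if_neg (Int.not_even_iff_odd.mpr he)]
        exact Or.inr (Or.inr rfl), ?_⟩
      simp only [phi]
      rw [show cA (a, b + 1) - cA (c, d) = cA (a, b) - cA (c, d) from by omega,
          show cB (a, b + 1) - cB (c, d) = cB (a, b) - cB (c, d) from by omega,
          show b + 1 - d = (b - d) + 1 from by omega]
      exact k

lemma triNbrs_symm {r p : ℤ × ℤ} (h : r ∈ triNbrs p) : p ∈ triNbrs r := by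
  obtain ⟨a, b⟩ := p
  rw [mem_triNbrs] at h
  rcases Int.even_or_odd (a + b) with he | he
  · have he' := Int.even_iff.mp he
    rw [if_pos he] at h
    rcases h with h | h | h <;> subst h <;> rw [mem_triNbrs]
    · exact Or.inr (Or.inl (by norm_num))
    · exact Or.inl (by norm_num)
    · refine Or.inr (Or.inr ?_)
      rw [if_neg (by rw [Int.even_iff]; omega)]
      norm_num
  · have he' := Int.odd_iff.mp he
    rw [if_neg (Int.not_even_iff_odd.mpr he)] at h
    rcases h with h | h | h <;> subst h <;> rw [mem_triNbrs]
    · exact Or.inr (Or.inl (by norm_num))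
    · exact Or.inl (by norm_num)
    · refine Or.inr (Or.inr ?_)
      rw [if_pos (by rw [Int.even_iff]; omega)]
      norm_num

/-! ### `triDist = phi` -/

lemma phi_le_steps : ∀ (n : ℕ) (p q : ℤ × ℤ), triStepsTo n p q → phi p q ≤ n := by
  intro n
  induction n with
  | zero => intro p q h; rw [show p = q from h, phi_eq_zero_iff.mpr rfl]
  | succ n IH =>
    rintro p q ⟨r, hr, hsteps⟩
    have h1 := (phi_step hr q).1
    have h2 := IH r q hsteps
    omega

lemma steps_of_phi : ∀ (n : ℕ) (p q : ℤ × ℤ), phi p q = n → triStepsTo n p q := by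
  intro n
  induction n using Nat.strong_induction_on with
  | _ n IH =>
    intro p q h
    match n with
    | 0 => exact phi_eq_zero_iff.mp h
    | n + 1 =>
      have hne : p ≠ q := by
        intro e; rw [e, phi_eq_zero_iff.mpr rfl] at h; omega
      obtain ⟨r, hr, hphi⟩ := phi_descent hne
      exact ⟨r, hr, IH n (by omega) r q (by omega)⟩

lemma triDist_eq_phi (p q : ℤ × ℤ) : triDist p q = phi p q := by
  have h1 : triStepsTo (phi p q) p q := steps_of_phi _ p q rfl
  have h2 : triDist p q ≤ phi p q := Nat.sInf_le h1
  have h3 : triDist p q ∈ {n | triStepsTo n p q} := Nat.sInf_mem ⟨_, h1⟩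
  have h4 : phi p q ≤ triDist p q := phi_le_steps _ p q h3
  omega

/-! ### Dynamics -/

lemma ruleT_le (I : Finset ℕ) {c : ℤ × ℤ → Bool} {p : ℤ × ℤ} (h : c p = true) :
    ruleT I c p = true := by
  simp [ruleT, h]

lemma speed (c : ℤ × ℤ → Bool) (t : ℕ) :
    ∀ p : ℤ × ℤ, (ruleT {1, 2})^[t] c p = true → ∃ w, c w = true ∧ phi p w ≤ t := by
  induction t with
  | zero => intro p h; exact ⟨p, h, le_of_eq (phi_eq_zero_iff.mpr rfl)⟩
  | succ t IH =>
    intro p h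
    rw [Function.iterate_succ_apply'] at h
    simp only [ruleT, Bool.or_eq_true, decide_eq_true_eq] at h
    rcases h with h | h
    · obtain ⟨w, hw, hle⟩ := IH p h
      exact ⟨w, hw, by omega⟩
    · have hcard : 1 ≤ triActCount ((ruleT {1, 2})^[t] c) p := by
        simp only [Finset.mem_insert, Finset.mem_singleton] at h
        omega
      obtain ⟨q, hq⟩ := Finset.card_pos.mp hcard
      obtain ⟨hq1, hq2⟩ := Finset.mem_filter.mp hq
      obtain ⟨w, hw, hle⟩ := IH q hq2
      have := (phi_step hq1 w).1
      exact ⟨w, hw, by omega⟩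

lemma card_triNbrs_le (p : ℤ × ℤ) : (triNbrs p).card ≤ 3 := by
  unfold triNbrs
  refine (Finset.card_insert_le _ _).trans ?_
  refine Nat.add_le_add_right ?_ 1
  refine (Finset.card_insert_le _ _).trans ?_
  simp

lemma grow (c : ℤ × ℤ → Bool) :
    ∀ (k : ℕ) (p : ℤ × ℤ), (∀ w, c w = true → k ≤ phi p w) →
      (∃ w, c w = true ∧ phi p w = k) →
      (∃ q ∈ triNbrs p, ∀ w, c w = true → k + 1 ≤ phi q w) →
      (ruleT {1, 2})^[k] c p = true := by
  intro k
  induction k using Nat.strong_induction_on with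
  | _ k IH =>
    intro p hlb hex hgood
    obtain ⟨w, hw, hpw⟩ := hex
    obtain ⟨q, hq, hqf⟩ := hgood
    match k with
    | 0 =>
      rw [phi_eq_zero_iff] at hpw
      rw [hpw]; exact hw
    | k + 1 =>
      have hpne : p ≠ w := by
        intro e; rw [e, phi_eq_zero_iff.mpr rfl] at hpw; omega
      obtain ⟨r, hr, hrphi⟩ := phi_descent hpne
      have hrlb : ∀ w', c w' = true → k ≤ phi r w' := fun w' hw' => by
        have h1 := (phi_step hr w').1
        have h2 := hlb w' hw'
        omega
      have hrstate : (ruleT {1, 2})^[k] c r = true := by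
        refine IH k (by omega) r hrlb ⟨w, hw, by omega⟩
          ⟨p, triNbrs_symm hr, fun w' hw' => ?_⟩
        have := hlb w' hw'; omega
      have hqoff : ¬ ((ruleT {1, 2})^[k] c q = true) := by
        intro hbc
        obtain ⟨w', hw', hle⟩ := speed c k q hbc
        have := hqf w' hw'
        omega
      rw [Function.iterate_succ_apply']
      by_cases hp : (ruleT {1, 2})^[k] c p = true
      · exact ruleT_le _ hp
      · have hiff : ∀ (c' : ℤ × ℤ → Bool) (p' : ℤ × ℤ), ruleT {1, 2} c' p' = true ↔
            (c' p' = true ∨ triActCount c' p' ∈ ({1, 2} : Finset ℕ)) := by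
          intro c' p'; simp [ruleT]
        rw [hiff]
        right
        have h1 : 1 ≤ triActCount ((ruleT {1, 2})^[k] c) p :=
          Finset.card_pos.mpr ⟨r, Finset.mem_filter.mpr ⟨hr, hrstate⟩⟩
        have h2 : triActCount ((ruleT {1, 2})^[k] c) p ≤ 2 := by
          have hsub : (triNbrs p).filter (fun x => (ruleT {1, 2})^[k] c x = true)
              ⊆ (triNbrs p).erase q := by
            intro x hx
            obtain ⟨hx1, hx2⟩ := Finset.mem_filter.mp hx
            refine Finset.mem_erase.mpr ⟨?_, hx1⟩
            intro e
            exact hqoff (by rw [← e]; exact hx2)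
          have hle := Finset.card_le_card hsub
          rw [Finset.card_erase_of_mem hq] at hle
          have h3 := card_triNbrs_le p
          calc triActCount ((ruleT {1, 2})^[k] c) p
              = ((triNbrs p).filter (fun x => (ruleT {1, 2})^[k] c x = true)).card := rfl
            _ ≤ (triNbrs p).card - 1 := hle
            _ ≤ 2 := by omega
        simp only [Finset.mem_insert, Finset.mem_singleton]
        exact Or.elim (Nat.eq_or_lt_of_le h1) (fun h => Or.inl h.symm)
          (fun h => Or.inr (le_antisymm h2 h))

/-! ### The geometric lemma -/

lemma semiPlane_mk (a b : ℤ) (v : ℤ × ℤ) :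
    semiPlane (a, b) v =
      if v = (a, b - 1) then {w | w.2 < b}
      else if v = (a, b + 1) then {w | b < w.2}
      else if v = (a + 1, b) then
        (if Even (a + b) then {w | a + b < w.1 + w.2}
         else {w | a - b < w.1 - w.2})
      else
        (if Even (a + b) then {w | b - a < w.2 - w.1}
         else {w | w.1 + w.2 < a + b}) := rfl

lemma geom {u v w : ℤ × ℤ} (hv : v ∈ triNbrs u) (hd2 : 2 ≤ phi u w) :
    w ∈ semiPlane u v ↔ phi v w + 1 = phi u w := by
  clear hd2
  obtain ⟨a, b⟩ := u; obtain ⟨x, y⟩ := w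
  obtain ⟨g1, g2⟩ := coords (a, b); obtain ⟨g3, g4⟩ := coords (x, y)
  obtain ⟨l1, l2⟩ := cleft a b
  obtain ⟨r1, r2⟩ := cright a b
  rw [mem_triNbrs] at hv
  rcases Int.even_or_odd (a + b) with he | he
  · have he' := Int.even_iff.mp he
    obtain ⟨v1, v2⟩ := cdown a b he'
    rw [if_pos he] at hv
    rcases hv with hv | hv | hv <;> subst hv
    · -- v = (a - 1, b)
      show (x, y) ∈ semiPlane (a, b) (a - 1, b) ↔
        phi (a - 1, b) (x, y) + 1 = phi (a, b) (x, y)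
      rw [semiPlane_mk,
        if_neg (by intro hh; rw [Prod.mk.injEq] at hh; omega),
        if_neg (by intro hh; rw [Prod.mk.injEq] at hh; omega),
        if_neg (by intro hh; rw [Prod.mk.injEq] at hh; omega),
        if_pos he,
        show (phi (a - 1, b) (x, y) + 1 = phi (a, b) (x, y)) ↔
            0 < cB (a, b) - cB (x, y) from ?_]
      · show (b - a < y - x) ↔ _
        omega
      · simp only [phi]
        rw [show cA (a - 1, b) - cA (x, y) = cA (a, b) - cA (x, y) from by omega,
            show cB (a - 1, b) - cB (x, y) = cB (a, b) - cB (x, y) - 1 from by omega]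
        exact iym _ _ _
    · -- v = (a + 1, b)
      show (x, y) ∈ semiPlane (a, b) (a + 1, b) ↔
        phi (a + 1, b) (x, y) + 1 = phi (a, b) (x, y)
      rw [semiPlane_mk,
        if_neg (by intro hh; rw [Prod.mk.injEq] at hh; omega),
        if_neg (by intro hh; rw [Prod.mk.injEq] at hh; omega),
        if_pos rfl, if_pos he,
        show (phi (a + 1, b) (x, y) + 1 = phi (a, b) (x, y)) ↔
            cA (a, b) - cA (x, y) < 0 from ?_]
      · show (a + b < x + y) ↔ _
        omega
      · simp only [phi]
        rw [show cA (a + 1, b) - cA (x, y) = cA (a, b) - cA (x, y) + 1 from by omega,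
            show cB (a + 1, b) - cB (x, y) = cB (a, b) - cB (x, y) from by omega]
        exact ixp _ _ _
    · -- v = (a, b - 1)
      show (x, y) ∈ semiPlane (a, b) (a, b - 1) ↔
        phi (a, b - 1) (x, y) + 1 = phi (a, b) (x, y)
      rw [semiPlane_mk, if_pos rfl,
        show (phi (a, b - 1) (x, y) + 1 = phi (a, b) (x, y)) ↔
            0 < (b - y : ℤ) from ?_]
      · show (y < b) ↔ _
        omega
      · simp only [phi]
        rw [show cA (a, b - 1) - cA (x, y) = cA (a, b) - cA (x, y) from by omega,
            show cB (a, b - 1) - cB (x, y) = cB (a, b) - cB (x, y) from by omega,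
            show (b - 1 - y : ℤ) = (b - y) - 1 from by ring]
        exact izm _ _ _
  · have he' := Int.odd_iff.mp he
    have hne := Int.not_even_iff_odd.mpr he
    obtain ⟨v1, v2⟩ := cup a b he'
    rw [if_neg hne] at hv
    rcases hv with hv | hv | hv <;> subst hv
    · -- v = (a - 1, b)
      show (x, y) ∈ semiPlane (a, b) (a - 1, b) ↔
        phi (a - 1, b) (x, y) + 1 = phi (a, b) (x, y)
      rw [semiPlane_mk,
        if_neg (by intro hh; rw [Prod.mk.injEq] at hh; omega),
        if_neg (by intro hh; rw [Prod.mk.injEq] at hh; omega),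
        if_neg (by intro hh; rw [Prod.mk.injEq] at hh; omega),
        if_neg hne,
        show (phi (a - 1, b) (x, y) + 1 = phi (a, b) (x, y)) ↔
            0 < cA (a, b) - cA (x, y) from ?_]
      · show (x + y < a + b) ↔ _
        omega
      · simp only [phi]
        rw [show cA (a - 1, b) - cA (x, y) = cA (a, b) - cA (x, y) - 1 from by omega,
            show cB (a - 1, b) - cB (x, y) = cB (a, b) - cB (x, y) from by omega]
        exact ixm _ _ _
    · -- v = (a + 1, b)
      show (x, y) ∈ semiPlane (a, b) (a + 1, b) ↔
        phi (a + 1, b) (x, y) + 1 = phi (a, b) (x, y)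
      rw [semiPlane_mk,
        if_neg (by intro hh; rw [Prod.mk.injEq] at hh; omega),
        if_neg (by intro hh; rw [Prod.mk.injEq] at hh; omega),
        if_pos rfl, if_neg hne,
        show (phi (a + 1, b) (x, y) + 1 = phi (a, b) (x, y)) ↔
            cB (a, b) - cB (x, y) < 0 from ?_]
      · show (a - b < x - y) ↔ _
        omega
      · simp only [phi]
        rw [show cA (a + 1, b) - cA (x, y) = cA (a, b) - cA (x, y) from by omega,
            show cB (a + 1, b) - cB (x, y) = cB (a, b) - cB (x, y) + 1 from by omega]
        exact iyp _ _ _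
    · -- v = (a, b + 1)
      show (x, y) ∈ semiPlane (a, b) (a, b + 1) ↔
        phi (a, b + 1) (x, y) + 1 = phi (a, b) (x, y)
      rw [semiPlane_mk,
        if_neg (by intro hh; rw [Prod.mk.injEq] at hh; omega),
        if_pos rfl,
        show (phi (a, b + 1) (x, y) + 1 = phi (a, b) (x, y)) ↔
            (b - y : ℤ) < 0 from ?_]
      · show (b < y) ↔ _
        omega
      · simp only [phi]
        rw [show cA (a, b + 1) - cA (x, y) = cA (a, b) - cA (x, y) from by omega,
            show cB (a, b + 1) - cB (x, y) = cB (a, b) - cB (x, y) from by omega,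
            show (b + 1 - y : ℤ) = (b - y) + 1 from by ring]
        exact izp _ _ _

/-- under rule 12 on the triangular grid, if the nearest active
cell is at distance `d ≥ 2` from `u` and `v` is a neighbor of `u`, then `v` is
active after `d-1` steps iff `S_v ∩ D_d(u)` contains a cell active in `c`. -/
theorem stmt2 (c : ℤ × ℤ → Bool) (u : ℤ × ℤ) (d : ℕ)
    (hact : ∃ v, c v = true) (hd2 : 2 ≤ d)
    (hd : triDistToActive c u = d)
    (v : ℤ × ℤ) (hv : v ∈ triNbrs u) :
    (ruleT {1, 2})^[d - 1] c v = true ↔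
      ∃ w ∈ semiPlane u v, triDist u w = d ∧ c w = true := by
  unfold triDistToActive at hd
  obtain ⟨w0, hw0⟩ := hact
  have hne : {e | ∃ w, c w = true ∧ triDist u w = e}.Nonempty :=
    ⟨triDist u w0, w0, hw0, rfl⟩
  have hlow : ∀ w, c w = true → d ≤ phi u w := by
    intro w hw
    have h1 : triDist u w ∈ {e | ∃ w, c w = true ∧ triDist u w = e} := ⟨w, hw, rfl⟩
    have h2 := Nat.sInf_le h1
    rw [hd, triDist_eq_phi] at h2
    exact h2
  constructor
  · intro h
    obtain ⟨w, hw, hle⟩ := speed c (d - 1) v h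
    have h1 : d ≤ phi u w := hlow w hw
    have h2 : phi u w ≤ phi v w + 1 := (phi_step hv w).1
    have h3 : phi v w + 1 = phi u w := by omega
    have h4 : phi u w = d := by omega
    exact ⟨w, (geom hv (by omega)).mpr h3, by rw [triDist_eq_phi, h4], hw⟩
  · rintro ⟨w, hwS, hdist, hw⟩
    rw [triDist_eq_phi] at hdist
    have h3 : phi v w + 1 = phi u w := (geom hv (by omega)).mp hwS
    have hlowv : ∀ w', c w' = true → d - 1 ≤ phi v w' := by
      intro w' hw'
      have h1 := (phi_step hv w').1
      have h2 := hlow w' hw'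
      omega
    refine grow c (d - 1) v hlowv ⟨w, hw, by omega⟩
      ⟨u, triNbrs_symm hv, fun w' hw' => ?_⟩
    have := hlow w' hw'
    omega
end

section
/- In the triangular grid with a periodic configuration c (periodic of even period n in both coordinate directions): suppose the cell u is stable for c under rule 2 but not stable under rule 23, and let t be the first time-step at which u becomes active in the dynamics of rule 23. Then every cell of G[0,u] is active after t applications of rule 23, i.e. F_{23}^t(c)_w = 1 for every w in G[0,u]. -/
/-- A cell `u` is stable for `c` under `F` if it is inactive and remains
inactive at all times. -/
def isStable (F : (ℤ × ℤ → Bool) → (ℤ × ℤ → Bool)) (c : ℤ × ℤ → Bool)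
    (u : ℤ × ℤ) : Prop :=
  c u = false ∧ ∀ t : ℕ, F^[t] c u = false

/-- A configuration is periodic of period `n` in both coordinate directions. -/
def Periodic (n : ℕ) (c : ℤ × ℤ → Bool) : Prop :=
  ∀ p : ℤ × ℤ, c (p.1 + n, p.2) = c p ∧ c (p.1, p.2 + n) = c p

/-- The graph `G[0]` on the inactive cells of `c`, with adjacency inherited
from the triangular grid. -/
def triG0 (c : ℤ × ℤ → Bool) : SimpleGraph (ℤ × ℤ) where
  Adj p q := p ≠ q ∧ c p = false ∧ c q = false ∧ (q ∈ triNbrs p ∨ p ∈ triNbrs q)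
  symm := ⟨fun p q h => ⟨h.1.symm, h.2.2.1, h.2.1, h.2.2.2.symm⟩⟩
  loopless := ⟨fun p h => h.1 rfl⟩

/-!
Write `F₂`, `F₂₃` for the two rules. Compared along the two dynamics started from `c`, a cell
that is `F₂₃`-active but `F₂`-inactive has all three neighbours `F₂`-active (the invariant
`Shadowed`): firing with three active neighbours is the only extra move of `F₂₃`. Hence at the
never-firing cell `u` both rules count the same active neighbours, and since `u` fires under
`F₂₃` at time `t`, all three neighbours of `u` are `F₂`-active at time `t - 1`.

A cell firing under `F₂` has exactly one inactive neighbour. So if a cell `x` of a path of `G[0]`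
towards `u` fires while a neighbour off the path is inactive, the next cell of the path had fired
earlier, while `x`, off the rest of the path, was inactive; descending the path, `u` would fire.
Applied outward from `u`, this shows that the whole path is `F₂`-active, hence `F₂₃`-active, at
time `t - 1`.
-/

local notation "F₂" => ruleT {2}
local notation "F₂₃" => ruleT {2, 3}

lemma exists_lt_not_and_succ {P : ℕ → Prop} (h0 : ¬ P 0) {s : ℕ} (hs : P s) :
    ∃ r < s, ¬ P r ∧ P (r + 1) := by
  induction s with
  | zero => exact absurd hs h0
  | succ s ih =>
    by_cases h : P s
    · obtain ⟨r, hrs, hr⟩ := ih h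
      exact ⟨r, by omega, hr⟩
    · exact ⟨s, by omega, h, hs⟩

section Neighbours

lemma mem_triNbrs_comm {p q : ℤ × ℤ} (h : q ∈ triNbrs p) : p ∈ triNbrs q := by
  obtain ⟨i, j⟩ := p
  obtain ⟨a, b⟩ := q
  simp only [triNbrs, Finset.mem_insert, Finset.mem_singleton, Prod.mk.injEq] at h ⊢
  split_ifs at h ⊢ <;> simp only [Int.even_iff] at * <;> omega

lemma card_triNbrs (p : ℤ × ℤ) : (triNbrs p).card = 3 := by
  simp only [triNbrs]
  rw [Finset.card_insert_of_notMem, Finset.card_insert_of_notMem, Finset.card_singleton]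
  · simp only [Finset.mem_singleton, Prod.mk.injEq]
    split_ifs <;> omega
  · simp only [Finset.mem_insert, Finset.mem_singleton, Prod.mk.injEq]
    split_ifs <;> omega

lemma triG0_adj_mem_triNbrs {c : ℤ × ℤ → Bool} {x y : ℤ × ℤ} (h : (triG0 c).Adj x y) :
    y ∈ triNbrs x :=
  h.2.2.2.elim id mem_triNbrs_comm

variable (c : ℤ × ℤ → Bool) (p : ℤ × ℤ)

lemma triActCount_le_three : triActCount c p ≤ 3 :=
  card_triNbrs p ▸ Finset.card_filter_le _ _

lemma triActCount_eq_three_iff : triActCount c p = 3 ↔ ∀ q ∈ triNbrs p, c q = true := by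
  rw [triActCount, ← card_triNbrs p, Finset.card_filter_eq_iff]

lemma triActCount_le_one {w y : ℤ × ℤ} (hw : w ∈ triNbrs p) (hy : y ∈ triNbrs p) (hwy : w ≠ y)
    (hcw : c w = false) (hcy : c y = false) : triActCount c p ≤ 1 := by
  have hsplit := (triNbrs p).card_filter_add_card_filter_not (fun q => c q = true)
  have hinactive : ({w, y} : Finset (ℤ × ℤ)) ⊆ (triNbrs p).filter (fun q => ¬ c q = true) := by
    intro q hq
    simp only [Finset.mem_insert, Finset.mem_singleton] at hq
    rcases hq with rfl | rfl <;> simp [*]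
  have htwo := Finset.card_le_card hinactive
  rw [Finset.card_pair hwy] at htwo
  rw [card_triNbrs] at hsplit
  rw [triActCount]
  omega

lemma triActCount_mono {a b : ℤ × ℤ → Bool} (h : ∀ q, a q = true → b q = true) :
    triActCount a p ≤ triActCount b p :=
  Finset.card_le_card (Finset.monotone_filter_right _ fun q _ => h q)

end Neighbours

section Iterates

variable (I : Finset ℕ) (c : ℤ × ℤ → Bool) (p : ℤ × ℤ)

lemma ruleT_apply_eq_true_iff :
    ruleT I c p = true ↔ c p = true ∨ triActCount c p ∈ I := by
  simp [ruleT]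

lemma ruleT_apply_eq_false_iff :
    ruleT I c p = false ↔ c p = false ∧ triActCount c p ∉ I := by
  simp [ruleT]

lemma iterate_ruleT_eq_true_of_le {r s : ℕ} (h : r ≤ s) (hr : (ruleT I)^[r] c p = true) :
    (ruleT I)^[s] c p = true := by
  induction s, h using Nat.le_induction with
  | base => exact hr
  | succ s _ ih =>
    rw [Function.iterate_succ_apply', ruleT_apply_eq_true_iff]
    exact Or.inl ih

lemma iterate_ruleT_eq_false_of_le {r s : ℕ} (h : r ≤ s) (hs : (ruleT I)^[s] c p = false) :
    (ruleT I)^[r] c p = false := by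
  by_contra hr
  simp only [Bool.not_eq_false] at hr
  simp [iterate_ruleT_eq_true_of_le I c p h hr] at hs

lemma exists_iterate_ruleT_fire {s : ℕ} (hc : c p = false) (hs : (ruleT I)^[s] c p = true) :
    ∃ r < s, (ruleT I)^[r] c p = false ∧ (ruleT I)^[r + 1] c p = true := by
  obtain ⟨r, hrs, hr, hr'⟩ :=
    exists_lt_not_and_succ (P := fun r => (ruleT I)^[r] c p = true) (by simpa using hc) hs
  exact ⟨r, hrs, by simpa using hr, hr'⟩

end Iterates

section Comparison

def Shadowed (a b : ℤ × ℤ → Bool) : Prop :=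
  (∀ z, a z = true → b z = true) ∧
    ∀ z, b z = true → a z = false → ∀ q ∈ triNbrs z, a q = true

variable {a b : ℤ × ℤ → Bool}

lemma Shadowed.triActCount_eq (h : Shadowed a b) {p : ℤ × ℤ} (hp : a p = false) :
    triActCount b p = triActCount a p := by
  unfold triActCount
  congr 1
  refine Finset.filter_congr fun z hz => ⟨fun hbz => ?_, h.1 z⟩
  by_contra haz
  simp only [Bool.not_eq_true] at haz
  simp [h.2 z hbz haz p (mem_triNbrs_comm hz)] at hp

lemma Shadowed.forall_triNbrs_of_fire (h : Shadowed a b) {p : ℤ × ℤ}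
    (ha : F₂ a p = false) (hb : b p = false) (hb' : F₂₃ b p = true) :
    ∀ q ∈ triNbrs p, a q = true := by
  obtain ⟨hap, ha2⟩ := (ruleT_apply_eq_false_iff _ _ _).mp ha
  rw [ruleT_apply_eq_true_iff, hb, h.triActCount_eq hap] at hb'
  rw [← triActCount_eq_three_iff]
  simp only [Finset.mem_insert, Finset.mem_singleton, Bool.false_eq_true, false_or] at hb' ha2
  omega

lemma Shadowed.ruleT (h : Shadowed a b) : Shadowed (F₂ a) (F₂₃ b) := by
  refine ⟨fun z hz => ?_, fun z hbz haz q hq => ?_⟩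
  · rw [ruleT_apply_eq_true_iff] at hz ⊢
    refine hz.imp (h.1 z) fun h2 => ?_
    have hle := triActCount_mono z h.1
    have := triActCount_le_three b z
    simp only [Finset.mem_insert, Finset.mem_singleton] at h2 ⊢
    omega
  · rw [ruleT_apply_eq_true_iff]
    left
    cases hbz' : b z with
    | true => exact h.2 z hbz' ((ruleT_apply_eq_false_iff _ _ _).mp haz).1 q hq
    | false => exact h.forall_triNbrs_of_fire haz hbz' hbz q hq

lemma shadowed_iterate (c : ℤ × ℤ → Bool) (s : ℕ) : Shadowed (F₂^[s] c) (F₂₃^[s] c) := by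
  induction s with
  | zero => exact ⟨fun _ => id, fun z hb ha => by simp_all⟩
  | succ s ih =>
    rw [Function.iterate_succ_apply', Function.iterate_succ_apply']
    exact ih.ruleT

end Comparison

section Paths

variable {c : ℤ × ℤ → Bool} {u : ℤ × ℤ}

lemma mem_support_of_fire (hu : ∀ s, F₂^[s] c u = false) {x : ℤ × ℤ}
    (q : (triG0 c).Walk x u) (hq : q.IsPath) {s : ℕ}
    (hx : F₂^[s] c x = false) (hx' : F₂^[s + 1] c x = true) {w : ℤ × ℤ}
    (hw : w ∈ triNbrs x) (hws : F₂^[s] c w = false) : w ∈ q.support := by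
  induction q generalizing s w with
  | nil => simp [hu] at hx'
  | @cons x y u hxy q ih =>
    obtain ⟨hq, hxq⟩ := (SimpleGraph.Walk.cons_isPath_iff _ _).mp hq
    by_contra hwq
    rw [SimpleGraph.Walk.support_cons, List.mem_cons, not_or] at hwq
    have hwy : w ≠ y := fun h => hwq.2 (h ▸ q.start_mem_support)
    have hx2 : triActCount (F₂^[s] c) x = 2 := by
      rw [Function.iterate_succ_apply', ruleT_apply_eq_true_iff, hx] at hx'
      simpa using hx'
    have hys : F₂^[s] c y = true := by
      by_contra hys
      have := triActCount_le_one _ x hw (triG0_adj_mem_triNbrs hxy) hwy hws (by simpa using hys)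
      omega
    obtain ⟨r, hrs, hyr, hyr'⟩ := exists_iterate_ruleT_fire _ c y hxy.2.2.1 hys
    exact hxq (ih hu hq hyr hyr' (mem_triNbrs_comm (triG0_adj_mem_triNbrs hxy))
      (iterate_ruleT_eq_false_of_le _ c x hrs.le hx))

lemma eq_or_iterate_eq_true_of_isPath (hu : ∀ s, F₂^[s] c u = false) {τ : ℕ}
    (hnbrs : ∀ z ∈ triNbrs u, F₂^[τ] c z = true) {x : ℤ × ℤ} (q : (triG0 c).Walk x u)
    (hq : q.IsPath) : x = u ∨ F₂^[τ] c x = true := by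
  induction q with
  | nil => exact Or.inl rfl
  | @cons x y u hxy q ih =>
    obtain ⟨hq, hxq⟩ := (SimpleGraph.Walk.cons_isPath_iff _ _).mp hq
    have hyx := mem_triNbrs_comm (triG0_adj_mem_triNbrs hxy)
    refine Or.inr ?_
    rcases ih hu hnbrs hq with rfl | hy
    · exact hnbrs x hyx
    · by_contra hx
      simp only [Bool.not_eq_true] at hx
      obtain ⟨r, hrτ, hyr, hyr'⟩ := exists_iterate_ruleT_fire _ c y hxy.2.2.1 hy
      exact hxq (mem_support_of_fire hu q hq hyr hyr' hyx
        (iterate_ruleT_eq_false_of_le _ c x hrτ.le hx))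

end Paths

theorem stmt5_general (c : ℤ × ℤ → Bool) (u : ℤ × ℤ)
    (hstab2 : isStable (ruleT {2}) c u)
    (t : ℕ) (ht : (ruleT {2, 3})^[t] c u = true)
    (htmin : ∀ s < t, (ruleT {2, 3})^[s] c u = false) :
    ∀ w, (triG0 c).Reachable u w → (ruleT {2, 3})^[t] c w = true := by
  obtain ⟨hcu, hu⟩ := hstab2
  obtain ⟨τ, rfl⟩ : ∃ τ, t = τ + 1 :=
    Nat.exists_eq_succ_of_ne_zero fun h => by simp [h, hcu] at ht
  have hnbrs : ∀ z ∈ triNbrs u, F₂^[τ] c z = true := by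
    rw [Function.iterate_succ_apply'] at ht
    have hu' := hu (τ + 1)
    rw [Function.iterate_succ_apply'] at hu'
    exact (shadowed_iterate c τ).forall_triNbrs_of_fire hu' (htmin τ τ.lt_succ_self) ht
  rintro w ⟨q⟩
  rcases eq_or_iterate_eq_true_of_isPath hu hnbrs q.reverse.bypass q.reverse.bypass_isPath
    with rfl | hw
  · exact ht
  · exact iterate_ruleT_eq_true_of_le _ c w τ.le_succ ((shadowed_iterate c τ).1 w hw)

/-- triangular grid, `c` periodic of even period `n`. If `u` is
stable under rule 2 but not under rule 23, and `t` is the first time-step at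
which `u` becomes active under rule 23, then every cell of the connected
component `G[0,u]` of inactive cells containing `u` is active after `t`
applications of rule 23. -/
theorem stmt5 (n : ℕ) (hn : 0 < n) (hne : Even n) (c : ℤ × ℤ → Bool)
    (hper : Periodic n c) (u : ℤ × ℤ)
    (hstab2 : isStable (ruleT {2}) c u)
    (hnstab23 : ¬ isStable (ruleT {2, 3}) c u)
    (t : ℕ) (ht : (ruleT {2, 3})^[t] c u = true)
    (htmin : ∀ s < t, (ruleT {2, 3})^[s] c u = false) :
    ∀ w, (triG0 c).Reachable u w → (ruleT {2, 3})^[t] c w = true :=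
  stmt5_general c u hstab2 t ht htmin
end
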